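/- arXiv:1707.01975 — 2 statements merged into one kernel-verified Lean document; each statement's English description precedes it below -/
import Mathlib

section
/- Let n be a positive integer and i, i' positive integers with i' > i. In ℂ[α, c], the polynomial -α + (i'-i)·c divides (a_{i',n}·α + i'·b_{i',n}·c) * ∏_{l=i'+1}^{i'+n-1}(-α + l·c) - b_{i,n} * ∏_{l=i}^{i+n-1}(α + l·c), where a_{i,n} = C(n+i-1, n)*(n-1) and b_{i,n} = C(n+i-1, n)*(i - (i-1)n)/i. -/
/-!
Substituting `α ↦ (i' - i) c` kills the divisor, and the congruence `X j ≡ q` modulo `X j - q`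
shows that a polynomial vanishing under `X j ↦ q` is divisible by `X j - q`. After the
substitution both terms become scalar multiples of `c ^ n`; the shifted products are
ascending factorials, `∏_{l=i'+1}^{i'+n-1} (l - (i' - i)) = (i+1)^{(n-1)}` and
`∏_{l=i}^{i+n-1} (i' - i + l) = i'^{(n)}`, and the scalars agree because
`a_{i',n} (i' - i) + i' b_{i',n} = C(n+i'-1, n) (i - (i-1) n)` and
`C(n+i-1, n) i'^{(n)} = C(n+i'-1, n) i^{(n)}`.
-/

open MvPolynomial Finset

theorem MvPolynomial.X_sub_dvd_of_aeval_update_eq_zero {σ R : Type*} [CommRing R] [DecidableEq σ]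
    {j : σ} {q p : MvPolynomial σ R} (hp : aeval (Function.update X j q) p = 0) : X j - q ∣ p := by
  set π := Ideal.Quotient.mkₐ R (Ideal.span {X j - q})
  have hπ : π.comp (aeval (Function.update X j q)) = π := by
    refine algHom_ext fun k => ?_
    rcases eq_or_ne k j with rfl | hk
    · simpa [π] using (Ideal.Quotient.eq.2 (Ideal.mem_span_singleton_self (X k - q))).symm
    · simp [hk]
  have h := DFunLike.congr_fun hπ p
  rwa [AlgHom.comp_apply, hp, map_zero, Ideal.Quotient.mkₐ_eq_mk, eq_comm,
    Ideal.Quotient.eq_zero_iff_mem, Ideal.mem_span_singleton] at h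

theorem MvPolynomial.prod_C_mul_of_card_eq {σ ι R : Type*} [CommSemiring R] {s : Finset ι} {k : ℕ}
    (hs : #s = k) (f : ι → R) (p : MvPolynomial σ R) :
    ∏ l ∈ s, C (f l) * p = C (∏ l ∈ s, f l) * p ^ k := by
  rw [← hs, map_prod, prod_mul_pow_card]

theorem Nat.choose_mul_ascFactorial_comm (n i j : ℕ) :
    (n + i - 1).choose n * j.ascFactorial n = (n + j - 1).choose n * i.ascFactorial n := by
  rw [ascFactorial_eq_factorial_mul_choose', ascFactorial_eq_factorial_mul_choose',
    Nat.add_comm i, Nat.add_comm j]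
  ring

theorem prod_Ico_natCast_sub_add {R : Type*} [CommRing R] (a b k : ℕ) :
    ∏ l ∈ Ico a (a + k), ((l : R) - a + b) = b.ascFactorial k := by
  rw [prod_Ico_eq_prod_range, Nat.ascFactorial_eq_prod_range, Nat.add_sub_cancel_left]
  push_cast
  exact prod_congr rfl fun j _ => by ring

section Coefficients

variable (K : Type*) [Field K]

def aCoeff (n i : ℕ) : K := (n + i - 1).choose n * ((n : K) - 1)

def bCoeff (n i : ℕ) : K := (n + i - 1).choose n * (((i : K) - ((i - 1 : ℕ) : K) * n) / i)

variable {K} [CharZero K]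

theorem aCoeff_mul_sub_add_mul_bCoeff {n i' : ℕ} (hi' : 0 < i') (x : K) :
    aCoeff K n i' * ((i' : K) - x) + i' * bCoeff K n i' =
      (n + i' - 1).choose n * (x - (x - 1) * n) := by
  have : (i' : K) ≠ 0 := by exact_mod_cast hi'.ne'
  rw [aCoeff, bCoeff, Nat.cast_sub hi']
  field_simp
  ring

theorem bCoeff_mul_ascFactorial {n i : ℕ} (hn : 0 < n) (hi : 0 < i) (j : ℕ) :
    bCoeff K n i * j.ascFactorial n =
      (n + j - 1).choose n * ((i : K) - (i - 1) * n) * (i + 1).ascFactorial (n - 1) := by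
  obtain ⟨m, rfl⟩ : ∃ m, n = m + 1 := ⟨n - 1, by omega⟩
  have hasc : (i * (i + 1).ascFactorial m : K) = i.ascFactorial (m + 1) := by
    exact_mod_cast (Nat.succ_ascFactorial i m).trans Nat.ascFactorial_succ.symm
  have hchoose : ((m + 1 + i - 1).choose (m + 1) * j.ascFactorial (m + 1) : K) =
      (m + 1 + j - 1).choose (m + 1) * i.ascFactorial (m + 1) := by
    exact_mod_cast Nat.choose_mul_ascFactorial_comm (m + 1) i j
  have : (i : K) ≠ 0 := by exact_mod_cast hi.ne'
  rw [bCoeff, Nat.cast_sub hi, Nat.cast_one, Nat.add_sub_cancel]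
  field_simp
  linear_combination ((i : K) - (i - 1) * (m + 1 : ℕ)) *
    (hchoose - ((m + 1 + j - 1).choose (m + 1) : K) * hasc)

theorem aCoeff_bCoeff_prod_eq {n i i' : ℕ} (hn : 0 < n) (hi : 0 < i) (hi' : 0 < i') :
    (aCoeff K n i' * ((i' : K) - i) + i' * bCoeff K n i') *
        ∏ l ∈ Icc (i' + 1) (i' + n - 1), ((l : K) - (i' - i)) =
      bCoeff K n i * ∏ l ∈ Icc i (i + n - 1), ((i' : K) - i + l) := by
  have hprod₁ : ∏ l ∈ Icc (i' + 1) (i' + n - 1), ((l : K) - (i' - i)) =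
      (i + 1).ascFactorial (n - 1) := by
    rw [← Ico_add_one_right_eq_Icc, show i' + n - 1 + 1 = i' + 1 + (n - 1) by omega,
      ← prod_Ico_natCast_sub_add]
    exact prod_congr rfl fun l _ => by push_cast; ring
  have hprod₂ : ∏ l ∈ Icc i (i + n - 1), ((i' : K) - i + l) = i'.ascFactorial n := by
    rw [← Ico_add_one_right_eq_Icc, show i + n - 1 + 1 = i + n by omega,
      ← prod_Ico_natCast_sub_add]
    exact prod_congr rfl fun l _ => by ring
  rw [hprod₁, hprod₂, aCoeff_mul_sub_add_mul_bCoeff hi', bCoeff_mul_ascFactorial hn hi]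

end Coefficients

theorem stmt10 (n i i' : ℕ) (hn : 0 < n) (hi : 0 < i) (hii' : i < i') :
    let α : MvPolynomial (Fin 2) ℂ := X 0
    let c : MvPolynomial (Fin 2) ℂ := X 1
    let a' : ℂ := ((n + i' - 1).choose n : ℂ) * ((n : ℂ) - 1)
    let b' : ℂ := ((n + i' - 1).choose n : ℂ) * (((i' : ℂ) - ((i' - 1 : ℕ) : ℂ) * (n : ℂ)) / (i' : ℂ))
    let b : ℂ := ((n + i - 1).choose n : ℂ) * (((i : ℂ) - ((i - 1 : ℕ) : ℂ) * (n : ℂ)) / (i : ℂ))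
    (-α + C (((i' : ℂ) - (i : ℂ))) * c) ∣
      ((C a' * α + C ((i' : ℂ) * b') * c) * ∏ l ∈ Finset.Icc (i' + 1) (i' + n - 1), (-α + C (l : ℂ) * c)
        - C b * ∏ l ∈ Finset.Icc i (i + n - 1), (α + C (l : ℂ) * c)) := by
  intro α c a' b' b
  have key := congrArg (C : ℂ → MvPolynomial (Fin 2) ℂ) (aCoeff_bCoeff_prod_eq hn hi (hi.trans hii'))
  change C ((a' * _ + _ * b') * _) = C (b * _) at key
  simp only [map_mul, map_add] at key
  generalize (i' : ℂ) - i = d at key ⊢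
  rw [show -α + C d * c = -(X 0 - C d * X 1) by ring, neg_dvd]
  apply X_sub_dvd_of_aeval_update_eq_zero
  simp only [α, c, map_sub, map_mul, map_add, map_neg, map_prod, aeval_X, aeval_C, algebraMap_eq,
    Function.update_self, Function.update_of_ne one_ne_zero]
  have hprod₁ : ∏ l ∈ Icc (i' + 1) (i' + n - 1), (-(C d * X 1) + C (l : ℂ) * X 1) =
      C (∏ l ∈ Icc (i' + 1) (i' + n - 1), ((l : ℂ) - d)) * (X 1 : MvPolynomial (Fin 2) ℂ) ^ (n - 1) := by
    rw [← prod_C_mul_of_card_eq (by simp; omega)]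
    exact prod_congr rfl fun l _ => by rw [map_sub]; ring
  have hprod₂ : ∏ l ∈ Icc i (i + n - 1), (C d * X 1 + C (l : ℂ) * X 1) =
      C (∏ l ∈ Icc i (i + n - 1), (d + l)) * (X 1 : MvPolynomial (Fin 2) ℂ) ^ n := by
    rw [← prod_C_mul_of_card_eq (by simp; omega)]
    exact prod_congr rfl fun l _ => by rw [map_add]; ring
  have hpow : (X 1 : MvPolynomial (Fin 2) ℂ) ^ (n - 1) * X 1 = X 1 ^ n := pow_sub_one_mul hn.ne' _
  rw [hprod₁, hprod₂]
  linear_combination (X 1 : MvPolynomial (Fin 2) ℂ) ^ n * key +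
    (C a' * C d + C (i' : ℂ) * C b') * C (∏ l ∈ Icc (i' + 1) (i' + n - 1), ((l : ℂ) - d)) * hpow
end

section
/- Let Z_fin = { (z₁, z₂) ∈ ℂ[α] × ℂ[α] | α divides z₁ - z₂ }, and fix n ≥ 1. Define a_j = 0 for j ≤ n-2, a_{n-1} = (0, α^n), and for j ≥ n, a_j = (-a_{j-n+1,n}·(-α)^n, b_{j-n+1,n}·α^n) where a_{i,n} = C(n+i-1,n)(n-1) and b_{i,n} = C(n+i-1,n)(i-(i-1)n)/i. Then for every m ≥ 0, ∑_{j=0}^{m} (-1)^j C(m,j) a_j belongs to ((-α)^m, α^m)·Z_fin. -/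
/-!
Since `C(j, n) = 0` for `j < n`, the piecewise definition collapses to the single closed form
`a_j = (-(n-1) C(j,n) (-α)^n, ((1-n) C(j,n) + C(j,n-1)) α^n)`, valid for every `j`. The alternating
binomial transform of `j ↦ C(j,k)` is `(-1)^m` times its `m`-th forward difference at `0`, that is
`(-1)^k δ_{mk}`.
So the `m`-th sum vanishes unless `m ∈ {n-1, n}`; for `m = n - 1` the quotient by
`((-α)^m, α^m)` is `(0, ±α)`, and for `m = n` both coordinates get the same constant.
-/

open Polynomial Finset

theorem Int.alternating_sum_range_choose_mul_choose (m k : ℕ) :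
    ∑ j ∈ Finset.range (m + 1), (-1 : ℤ) ^ j * m.choose j * j.choose k =
      if m = k then (-1) ^ k else 0 := by
  have h := congrArg ((-1 : ℤ) ^ m * ·) (fwdDiff_iter_choose_zero k m)
  simp only [fwdDiff_iter_eq_sum_shift, mul_sum, smul_eq_mul, zero_add, mul_ite, mul_one,
    mul_zero] at h
  calc _ = ∑ j ∈ Finset.range (m + 1),
          (-1 : ℤ) ^ m * ((-1) ^ (m - j) * m.choose j * j.choose k) := by
        refine sum_congr rfl fun j hj => ?_
        have hm : (-1 : ℤ) ^ m = (-1) ^ j * (-1) ^ (m - j) := by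
          rw [← pow_add, Nat.add_sub_cancel' (Nat.lt_succ_iff.mp (mem_range.mp hj))]
        have hsq : (-1 : ℤ) ^ (m - j) * (-1) ^ (m - j) = 1 := by rw [← mul_pow]; norm_num
        rw [hm]
        linear_combination (-((-1) ^ j * m.choose j * j.choose k : ℤ)) * hsq
    _ = if m = k then (-1) ^ m else 0 := h
    _ = _ := by split_ifs with hmk <;> simp [hmk]

theorem alternating_sum_range_choose_mul_choose {R : Type*} [Ring R] (m k : ℕ) :
    ∑ j ∈ range (m + 1), (-1 : R) ^ j * m.choose j * j.choose k =
      if m = k then (-1) ^ k else 0 := by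
  have := congrArg (Int.cast : ℤ → R) (Int.alternating_sum_range_choose_mul_choose m k)
  push_cast [apply_ite (Int.cast : ℤ → R)] at this
  exact this

theorem cast_choose_mul_sub_div_eq {K : Type*} [Field K] [CharZero K] {n i : ℕ} (hn : 0 < n)
    (hi : 0 < i) :
    ((n + i - 1).choose n : K) * (((i : K) - ((i - 1 : ℕ) : K) * n) / i) =
      (1 - n) * (n + i - 1).choose n + (n + i - 1).choose (n - 1) := by
  have hrec : ((n + i - 1).choose n : K) * n = (n + i - 1).choose (n - 1) * i := by
    have := Nat.choose_succ_right_eq (n + i - 1) (n - 1)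
    rw [Nat.sub_add_cancel hn, show n + i - 1 - (n - 1) = i by omega] at this
    exact_mod_cast this
  have hi' : (i : K) ≠ 0 := Nat.cast_ne_zero.mpr hi.ne'
  rw [Nat.cast_pred hi]
  field_simp
  linear_combination hrec

theorem ite_pair_eq_choose_form {n : ℕ} (hn : 0 < n) {A B : ℕ → ℂ}
    (hA : ∀ i, A i = ((n + i - 1).choose n : ℂ) * ((n : ℂ) - 1))
    (hB : ∀ i, B i =
      ((n + i - 1).choose n : ℂ) * (((i : ℂ) - ((i - 1 : ℕ) : ℂ) * (n : ℂ)) / (i : ℂ)))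
    (j : ℕ) :
    (if j + 2 ≤ n then 0
      else if j + 1 = n then (0, X ^ n)
      else (C (-(A (j - n + 1))) * (-X) ^ n, C (B (j - n + 1)) * X ^ n)) =
    (C (-(((n : ℂ) - 1) * j.choose n)) * (-X) ^ n,
      C ((1 - (n : ℂ)) * j.choose n + j.choose (n - 1)) * X ^ n) := by
  split_ifs with h₁ h₂
  · simp [Nat.choose_eq_zero_of_lt (show j < n by omega),
      Nat.choose_eq_zero_of_lt (show j < n - 1 by omega), Prod.zero_eq_mk]
  · simp [Nat.choose_eq_zero_of_lt (show j < n by omega), show n - 1 = j by omega]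
  · have hj : n + (j - n + 1) - 1 = j := by omega
    rw [hA, hB, cast_choose_mul_sub_div_eq hn (Nat.succ_pos _), hj, mul_comm _ ((n : ℂ) - 1)]

theorem sum_smul_C_mul_pair {R ι : Type*} [CommRing R] (s : Finset ι) (w p q : ι → R)
    (P Q : R[X]) :
    ∑ j ∈ s, w j • (C (p j) * P, C (q j) * Q) =
      (C (∑ j ∈ s, w j * p j) * P, C (∑ j ∈ s, w j * q j) * Q) := by
  ext1 <;> simp [Prod.fst_sum, Prod.snd_sum, smul_eq_C_mul, sum_mul, mul_assoc]

theorem exists_X_dvd_sub_and_eq_mul {R : Type*} [CommRing R] {m n : ℕ} {c₁ c₂ : R}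
    (hlt : n < m → c₁ = 0 ∧ c₂ = 0) (heq : m = n → c₁ = c₂) :
    ∃ z : R[X] × R[X], X ∣ z.1 - z.2 ∧
      (C c₁ * (-X) ^ n, C c₂ * X ^ n) = ((-X) ^ m, X ^ m) * z := by
  rcases lt_or_ge n m with hnm | hmn
  · obtain ⟨rfl, rfl⟩ := hlt hnm
    exact ⟨0, by simp, by simp [Prod.zero_eq_mk]⟩
  refine ⟨(C c₁ * (-X) ^ (n - m), C c₂ * X ^ (n - m)), ?_, ?_⟩
  · rcases hmn.lt_or_eq with hlt | rfl
    · exact dvd_sub (dvd_mul_of_dvd_right (dvd_pow (dvd_neg.mpr dvd_rfl) (by omega)) _)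
        (dvd_mul_of_dvd_right (dvd_pow_self _ (by omega)) _)
    · simp [heq rfl]
  · simp only [Prod.mk_mul_mk, mul_left_comm _ (C _), ← pow_add, Nat.add_sub_cancel' hmn]

theorem stmt15 (n : ℕ) (hn : 0 < n)
    (A B : ℕ → ℂ)
    (hA : ∀ i, A i = ((n + i - 1).choose n : ℂ) * ((n : ℂ) - 1))
    (hB : ∀ i, B i = ((n + i - 1).choose n : ℂ) * (((i : ℂ) - ((i - 1 : ℕ) : ℂ) * (n : ℂ)) / (i : ℂ)))
    (a : ℕ → Polynomial ℂ × Polynomial ℂ)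
    (ha : ∀ j, a j =
      if j + 2 ≤ n then 0
      else if j + 1 = n then (0, X ^ n)
      else (C (-(A (j - n + 1))) * (-X) ^ n, C (B (j - n + 1)) * X ^ n)) :
    ∀ m : ℕ, ∃ z : Polynomial ℂ × Polynomial ℂ, X ∣ z.1 - z.2 ∧
      ∑ j ∈ Finset.range (m + 1), ((-1 : ℂ) ^ j * (m.choose j : ℂ)) • a j
        = ((-X) ^ m, X ^ m) * z := by
  intro m
  have hδ := alternating_sum_range_choose_mul_choose (R := ℂ) m
  have h₁ : ∑ j ∈ range (m + 1), (-1 : ℂ) ^ j * m.choose j * -(((n : ℂ) - 1) * j.choose n) =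
      -((n - 1) * if m = n then (-1) ^ n else 0) := by
    rw [← hδ, mul_sum, ← sum_neg_distrib]
    exact sum_congr rfl fun _ _ => by ring
  have h₂ : ∑ j ∈ range (m + 1),
      (-1 : ℂ) ^ j * m.choose j * ((1 - n) * j.choose n + j.choose (n - 1)) =
        (1 - n) * (if m = n then (-1) ^ n else 0) + if m = n - 1 then (-1) ^ (n - 1) else 0 := by
    rw [← hδ, ← hδ, mul_sum, ← sum_add_distrib]
    exact sum_congr rfl fun _ _ => by ring
  simp_rw [ha, ite_pair_eq_choose_form hn hA hB, sum_smul_C_mul_pair, h₁, h₂]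
  apply exists_X_dvd_sub_and_eq_mul
  · intro hnm
    simp [hnm.ne', show m ≠ n - 1 by omega]
  · rintro rfl
    rw [if_pos rfl, if_neg (by omega), add_zero]
    ring
end
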